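/- arXiv:1712.02397 — 2 statements merged into one kernel-verified Lean document; each statement's English description precedes it below -/
import Mathlib

section
/- Let α := (55/(9√π)) · Γ(5/6)/Γ(1/3) and let u' > 0, k_e > 0. Define the von Kármán spectrum (without viscous cutoff) E(k) = α (u'²/k_e) (k/k_e)⁴ [1 + (k/k_e)²]^{−17/6} for k > 0. Then ∫_0^∞ E(k) dk = (3/2) u'². That is, the constant α normalizes the total turbulent kinetic energy of the spectrum to k_t = (3/2) u'². -/
/-!
Substituting `x = k / kₑ` turns the energy into `α u'²` times `∫₀^∞ x⁴ (1 + x²)^(-17/6) dx`,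
and `s = x²` turns that into half the beta integral of the second kind,
`∫₀^∞ s^(3/2) (1 + s)^(-17/6) ds = B(5/2, 1/3) = Γ(5/2) Γ(1/3) / Γ(17/6)`.
With `Γ(5/2) = 3√π/4` and `Γ(17/6) = (55/36) Γ(5/6)` the integral is
`27 √π Γ(1/3) / (110 Γ(5/6)) = 3 / (2α)`.
-/

open Real MeasureTheory Set
open ProbabilityTheory (beta)

lemma integral_Ioo_rpow_mul_one_sub_rpow {u v : ℝ} (hu : 0 < u) (hv : 0 < v) :
    ∫ t in Ioo (0 : ℝ) 1, t ^ (u - 1) * (1 - t) ^ (v - 1) = beta u v := by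
  rw [ProbabilityTheory.beta_eq_betaIntegralReal u v hu hv, Complex.betaIntegral,
    intervalIntegral.integral_of_le zero_le_one, ← integral_Ioc_eq_integral_Ioo,
    ← RCLike.re_to_complex, ← integral_re]
  · refine setIntegral_congr_fun measurableSet_Ioc fun t ⟨ht0, ht1⟩ ↦ ?_
    norm_cast
    rw [← Complex.ofReal_cpow ht0.le, ← Complex.ofReal_cpow (sub_nonneg.mpr ht1),
      RCLike.re_to_complex, ← Complex.ofReal_mul, Complex.ofReal_re]
  · have := Complex.betaIntegral_convergent (u := u) (v := v) (by simpa) (by simpa)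
    rwa [intervalIntegrable_iff_integrableOn_Ioc_of_le zero_le_one] at this

lemma image_div_one_add_Ioi : (fun s : ℝ ↦ s / (1 + s)) '' Ioi 0 = Ioo 0 1 := by
  ext t
  constructor
  · rintro ⟨s, hs : 0 < s, rfl⟩
    exact ⟨by positivity, (div_lt_one (by positivity)).mpr (by linarith)⟩
  · rintro ⟨ht0, ht1⟩
    refine ⟨t / (1 - t), div_pos ht0 (sub_pos.mpr ht1), ?_⟩
    have : 1 - t ≠ 0 := (sub_pos.mpr ht1).ne'
    field_simp
    ring

lemma injOn_div_one_add_Ioi : InjOn (fun s : ℝ ↦ s / (1 + s)) (Ioi 0) := by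
  intro s (hs : 0 < s) r (hr : 0 < r) h
  rw [div_eq_div_iff (by positivity) (by positivity)] at h
  linarith

lemma hasDerivAt_div_one_add {s : ℝ} (hs : 1 + s ≠ 0) :
    HasDerivAt (fun s ↦ s / (1 + s)) ((1 + s) ^ 2)⁻¹ s :=
  ((hasDerivAt_id' s).fun_div ((hasDerivAt_id' s).const_add 1) hs).congr_deriv (by ring)

lemma integral_Ioi_rpow_mul_one_add_rpow {u v : ℝ} (hu : 0 < u) (hv : 0 < v) :
    ∫ s in Ioi (0 : ℝ), s ^ (u - 1) * (1 + s) ^ (-(u + v)) = beta u v := by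
  rw [← integral_Ioo_rpow_mul_one_sub_rpow hu hv, ← image_div_one_add_Ioi,
    integral_image_eq_integral_abs_deriv_smul measurableSet_Ioi
      (fun s (hs : 0 < s) ↦ (hasDerivAt_div_one_add (by positivity)).hasDerivWithinAt)
      injOn_div_one_add_Ioi]
  refine setIntegral_congr_fun measurableSet_Ioi fun s (hs : 0 < s) ↦ ?_
  have h1s : 0 < 1 + s := by positivity
  have hsplit : (1 + s) ^ (u + v) = (1 + s) ^ 2 * (1 + s) ^ (u - 1) * (1 + s) ^ (v - 1) := by
    rw [← rpow_natCast, ← rpow_add h1s, ← rpow_add h1s]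
    congr 1
    push_cast
    ring
  rw [one_sub_div h1s.ne', add_sub_cancel_right, div_rpow hs.le h1s.le,
    div_rpow zero_le_one h1s.le, one_rpow, abs_of_pos (by positivity), smul_eq_mul,
    rpow_neg h1s.le, hsplit]
  field_simp

lemma integral_Ioi_rpow_mul_one_add_sq_rpow {u v : ℝ} (hu : 0 < u) (hv : 0 < v) :
    ∫ x in Ioi (0 : ℝ), x ^ (2 * u - 1) * (1 + x ^ 2) ^ (-(u + v)) = beta u v / 2 := by
  rw [← integral_Ioi_rpow_mul_one_add_rpow hu hv,
    ← integral_comp_rpow_Ioi_of_pos (g := fun s ↦ s ^ (u - 1) * (1 + s) ^ (-(u + v))) two_pos,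
    ← integral_div]
  refine setIntegral_congr_fun measurableSet_Ioi fun x (hx : 0 < x) ↦ ?_
  have hsplit : x ^ (2 * u - 1) = x ^ ((2 : ℝ) - 1) * (x ^ (2 : ℝ)) ^ (u - 1) := by
    rw [← rpow_mul hx.le, ← rpow_add hx]
    ring_nf
  rw [smul_eq_mul, hsplit, rpow_two]
  ring

lemma integral_Ioi_comp_div {E : Type*} [NormedAddCommGroup E] [NormedSpace ℝ E] (g : ℝ → E)
    {c : ℝ} (hc : 0 < c) :
    ∫ x in Ioi (0 : ℝ), g (x / c) = c • ∫ x in Ioi (0 : ℝ), g x := by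
  simpa [div_eq_mul_inv] using integral_comp_mul_right_Ioi g 0 (inv_pos.mpr hc)

lemma Gamma_five_halves : Gamma (5 / 2) = 3 / 4 * √π := by
  have h := Gamma_nat_add_half 2
  norm_num [Nat.doubleFactorial] at h
  rw [h]
  ring

lemma Gamma_seventeen_sixths : Gamma (17 / 6) = 55 / 36 * Gamma (5 / 6) := by
  rw [show (17 : ℝ) / 6 = 5 / 6 + 1 + 1 by norm_num, Gamma_add_one (by norm_num),
    Gamma_add_one (by norm_num)]
  ring

lemma integral_Ioi_pow_four_mul_one_add_sq_rpow :
    ∫ x in Ioi (0 : ℝ), x ^ 4 * (1 + x ^ 2) ^ (-(17 / 6) : ℝ) =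
      27 * √π * Gamma (1 / 3) / (110 * Gamma (5 / 6)) := by
  have h := integral_Ioi_rpow_mul_one_add_sq_rpow (u := 5 / 2) (v := 1 / 3)
    (by norm_num) (by norm_num)
  norm_num [beta, Gamma_five_halves, Gamma_seventeen_sixths] at h
  rw [h]
  ring

theorem vonKarman_spectrum_total_kinetic_energy_general
    (α : ℝ) (hα : α = 55 / (9 * Real.sqrt π) * (Real.Gamma (5 / 6) / Real.Gamma (1 / 3)))
    (u' ke : ℝ) (hke : 0 < ke)
    (E : ℝ → ℝ)
    (hE : ∀ k ∈ Set.Ioi (0 : ℝ),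
      E k = α * (u' ^ 2 / ke) * (k / ke) ^ 4 * (1 + (k / ke) ^ 2) ^ (-(17 / 6) : ℝ)) :
    ∫ k in Set.Ioi (0 : ℝ), E k = 3 / 2 * u' ^ 2 := by
  have hshape : ∫ k in Ioi (0 : ℝ), (k / ke) ^ 4 * (1 + (k / ke) ^ 2) ^ (-(17 / 6) : ℝ) =
      ke * (27 * √π * Gamma (1 / 3) / (110 * Gamma (5 / 6))) := by
    rw [integral_Ioi_comp_div (fun x ↦ x ^ 4 * (1 + x ^ 2) ^ (-(17 / 6) : ℝ)) hke, smul_eq_mul,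
      integral_Ioi_pow_four_mul_one_add_sq_rpow]
  rw [setIntegral_congr_fun measurableSet_Ioi fun k hk ↦ (hE k hk).trans (mul_assoc _ _ _),
    integral_const_mul, hshape, hα]
  have hΓ13 : Gamma (1 / 3) ≠ 0 := (Gamma_pos_of_pos (by norm_num)).ne'
  have hΓ56 : Gamma (5 / 6) ≠ 0 := (Gamma_pos_of_pos (by norm_num)).ne'
  have hsqrtπ : √π ≠ 0 := (sqrt_pos.mpr pi_pos).ne'
  field_simp
  ring

theorem vonKarman_spectrum_total_kinetic_energy
    (α : ℝ) (hα : α = 55 / (9 * Real.sqrt π) * (Real.Gamma (5 / 6) / Real.Gamma (1 / 3)))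
    (u' ke : ℝ) (hu' : 0 < u') (hke : 0 < ke)
    (E : ℝ → ℝ)
    (hE : ∀ k ∈ Set.Ioi (0 : ℝ),
      E k = α * (u' ^ 2 / ke) * (k / ke) ^ 4 * (1 + (k / ke) ^ 2) ^ (-(17 / 6) : ℝ)) :
    ∫ k in Set.Ioi (0 : ℝ), E k = 3 / 2 * u' ^ 2 :=
  vonKarman_spectrum_total_kinetic_energy_general α hα u' ke hke E hE
end

section
/- Let α := (55/(9√π)) · Γ(5/6)/Γ(1/3) and let u' > 0, k_e > 0. Define the von Kármán spectrum (without viscous cutoff) E(k) = α (u'²/k_e) (k/k_e)⁴ [1 + (k/k_e)²]^{−17/6} for k > 0. Then ∫_0^∞ E(k)/k dk = (2Γ(5/6)/(√π Γ(1/3))) · u'²/k_e. Consequently, the integral length scale L := (π/(2u'²)) ∫_0^∞ E(k)/k dk satisfies k_e · L = √π · Γ(5/6)/Γ(1/3), i.e. k_e = √π (Γ(5/6)/Γ(1/3)) / L as asserted in Eq. (24) of the paper. -/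
/-!
Substituting `x = k / ke` turns `∫ E(k) / k dk` into `α u'² / ke` times
`∫₀^∞ x³ (1 + x²)^(-17/6) dx = 18 / 55`, and this factor cancels the `55 / 9` in `α`.
-/

open Real MeasureTheory Set Filter Topology

lemma hasDerivAt_one_add_sq_rpow (q x : ℝ) :
    HasDerivAt (fun t : ℝ => (1 + t ^ 2) ^ q) (q * (1 + x ^ 2) ^ (q - 1) * (2 * x)) x := by
  have hsq : HasDerivAt (fun t : ℝ => 1 + t ^ 2) (2 * x) x := by
    simpa using ((hasDerivAt_id x).pow 2).const_add 1
  exact (hasDerivAt_rpow_const (Or.inl (by positivity))).comp x hsq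

lemma tendsto_one_add_sq_rpow_neg_atTop {s : ℝ} (hs : 0 < s) :
    Tendsto (fun x : ℝ => (1 + x ^ 2) ^ (-s)) atTop (𝓝 0) :=
  (tendsto_rpow_neg_atTop hs).comp <|
    tendsto_atTop_add_const_left _ _ (tendsto_pow_atTop two_ne_zero)

/-- The antiderivative comes from substituting `y = 1 + x ^ 2`, which turns the integrand into
`(y - 1) * y ^ (-p) / 2`. -/
theorem integral_Ioi_cube_mul_one_add_sq_rpow_neg {p : ℝ} (hp : 2 < p) :
    ∫ x in Ioi 0, x ^ 3 * (1 + x ^ 2) ^ (-p) = 1 / (2 * (p - 1) * (p - 2)) := by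
  have hp1 : p - 1 ≠ 0 := by linarith
  have hp2 : p - 2 ≠ 0 := by linarith
  set F : ℝ → ℝ := fun x =>
    (1 + x ^ 2) ^ (-(p - 1)) / (2 * (p - 1)) - (1 + x ^ 2) ^ (-(p - 2)) / (2 * (p - 2))
  have hF' : ∀ x ∈ Ici (0 : ℝ), HasDerivAt F (x ^ 3 * (1 + x ^ 2) ^ (-p)) x := by
    intro x _
    have hy : 0 < 1 + x ^ 2 := by positivity
    refine (((hasDerivAt_one_add_sq_rpow _ x).div_const _).sub
      ((hasDerivAt_one_add_sq_rpow _ x).div_const _)).congr_deriv ?_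
    have hshift : (1 + x ^ 2) ^ (-(p - 2) - 1) = (1 + x ^ 2) * (1 + x ^ 2) ^ (-p) := by
      rw [mul_comm, ← rpow_add_one hy.ne']; ring_nf
    rw [hshift, show -(p - 1) - 1 = -p by ring]
    field_simp
    ring
  have hlim : Tendsto F atTop (𝓝 0) := by
    simpa [F] using ((tendsto_one_add_sq_rpow_neg_atTop (by linarith : 0 < p - 1)).div_const _).sub
      ((tendsto_one_add_sq_rpow_neg_atTop (by linarith : 0 < p - 2)).div_const _)
  have hnonneg : ∀ x ∈ Ioi (0 : ℝ), 0 ≤ x ^ 3 * (1 + x ^ 2) ^ (-p) := fun x hx => by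
    have := hx.out.le; positivity
  rw [integral_Ioi_of_hasDerivAt_of_nonneg' hF' hnonneg hlim]
  simp only [F, zero_pow two_ne_zero, add_zero, one_rpow]
  field_simp
  ring

theorem vonKarman_integral_length_scale
    (α : ℝ) (hα : α = 55 / (9 * Real.sqrt π) * (Real.Gamma (5 / 6) / Real.Gamma (1 / 3)))
    (u' ke : ℝ) (hu' : 0 < u') (hke : 0 < ke)
    (E : ℝ → ℝ)
    (hE : ∀ k ∈ Set.Ioi (0 : ℝ),
      E k = α * (u' ^ 2 / ke) * (k / ke) ^ 4 * (1 + (k / ke) ^ 2) ^ (-(17 / 6) : ℝ))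
    (L : ℝ) (hL : L = π / (2 * u' ^ 2) * ∫ k in Set.Ioi (0 : ℝ), E k / k) :
    (∫ k in Set.Ioi (0 : ℝ), E k / k
      = 2 * Real.Gamma (5 / 6) / (Real.sqrt π * Real.Gamma (1 / 3)) * (u' ^ 2 / ke)) ∧
    ke * L = Real.sqrt π * (Real.Gamma (5 / 6) / Real.Gamma (1 / 3)) := by
  have hspectrum : ∫ k in Ioi 0, E k / k = α * (u' ^ 2 / ke) * (18 / 55) := calc
    ∫ k in Ioi 0, E k / k
        = ∫ k in Ioi 0, α * u' ^ 2 / ke ^ 2 *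
            ((ke⁻¹ * k) ^ 3 * (1 + (ke⁻¹ * k) ^ 2) ^ (-(17 / 6) : ℝ)) :=
      setIntegral_congr_fun measurableSet_Ioi fun k hk => by
        rw [hE k hk, div_eq_inv_mul k]
        field_simp
    _ = α * u' ^ 2 / ke ^ 2 * (ke * (1 / (2 * (17 / 6 - 1) * (17 / 6 - 2)))) := by
      rw [integral_const_mul, integral_comp_mul_left_Ioi (fun x => x ^ 3 * (1 + x ^ 2) ^ _) 0
        (inv_pos.2 hke), mul_zero, integral_Ioi_cube_mul_one_add_sq_rpow_neg (by norm_num),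
        inv_inv, smul_eq_mul]
    _ = α * (u' ^ 2 / ke) * (18 / 55) := by
      field_simp
      ring
  have hintegral : ∫ k in Ioi 0, E k / k
      = 2 * Gamma (5 / 6) / (sqrt π * Gamma (1 / 3)) * (u' ^ 2 / ke) := by
    rw [hspectrum, hα]
    ring
  refine ⟨hintegral, ?_⟩
  rw [hL, hintegral]
  field_simp
  exact (sq_sqrt pi_pos.le).symm
end
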